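/- Let R¹, R², Y be independent random variables with R¹ ~ Beta(μ+λ, β), R² ~ InverseBeta(λ, μ), Y ~ Beta(μ, β), where λ, μ, β > 0. Then (Y + (1-Y)·R¹/R², Y·R²/R¹ + (1-Y)) has the same distribution as (R¹, R²). (Invariance of the beta model under T^{h,Y} with h(y) = 1-y.) -/

import Mathlib

open MeasureTheory ProbabilityTheory

noncomputable def gammaDist (a b : ℝ) : Measure ℝ :=
  volume.withDensity fun x => ENNReal.ofReal
    (if 0 < x then (Real.Gamma a)⁻¹ * b ^ a * x ^ (a - 1) * Real.exp (-(b * x)) else 0)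

noncomputable def betaDist (a b : ℝ) : Measure ℝ :=
  volume.withDensity fun x => ENNReal.ofReal
    (if 0 < x ∧ x < 1 then
      (Real.Gamma (a + b) / (Real.Gamma a * Real.Gamma b)) * x ^ (a - 1) * (1 - x) ^ (b - 1)
    else 0)

/-! With `X = R¹`, `W = 1/R²` and `U = XW`, the pair `(X, U)` has the law of `(U + V, U)` for a
Dirichlet(λ, μ, β) vector `(U, V, 1 - U - V)`; in particular `U` is Beta(λ, μ + β). Given `U = u`,
the rescaled remainder `(X - u)/(1 - u)` is Beta(μ, β), exactly like the independent `Y`, so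
`(U + (1 - U) Y, U)` has the same Dirichlet law. Both facts are computed by a shear change of
variables, `(x, w) ↦ (x, xw)` resp. `(u, y) ↦ (u, u + (1 - u) y)`. The map `(x, u) ↦ (x, x/u)`
sends the first pair to `(R¹, R²)` and the second to `T^{h,Y}(R¹, R²)`. -/

open Set
open scoped ENNReal

lemma lintegral_eq_ofReal_mul_lintegral_comp_affine {F : ℝ → ℝ≥0∞} (hF : Measurable F)
    {c : ℝ} (hc : 0 < c) (a : ℝ) :
    ∫⁻ s, F s = ENNReal.ofReal c * ∫⁻ y, F (a + c * y) := by
  have hmap : volume.map (fun y : ℝ => a + c * y) = ENNReal.ofReal c⁻¹ • volume := by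
    rw [show (fun y : ℝ => a + c * y) = (a + ·) ∘ (c * ·) from rfl,
      ← Measure.map_map (measurable_const_add a) (measurable_const_mul c),
      Real.map_volume_mul_left hc.ne', Measure.map_smul, map_add_left_eq_self,
      abs_of_pos (inv_pos.mpr hc)]
  rw [← lintegral_map (μ := volume) hF (by fun_prop : Measurable fun y : ℝ => a + c * y), hmap,
    lintegral_smul_measure, smul_eq_mul, ← mul_assoc,
    ← ENNReal.ofReal_mul hc.le, mul_inv_cancel₀ hc.ne', ENNReal.ofReal_one, one_mul]

lemma map_prod_affine_withDensity {α : Type*} [MeasurableSpace α] {ν : Measure α}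
    {f : ℝ → ℝ} (hf : Measurable f) {a c : α → ℝ} (ha : Measurable a) (hc : Measurable c)
    (hc_pos : ∀ᵐ x ∂ν, 0 < c x) :
    (ν.prod (volume.withDensity fun y => ENNReal.ofReal (f y))).map
        (fun p => (p.1, a p.1 + c p.1 * p.2))
      = (ν.prod volume).withDensity
          fun p => ENNReal.ofReal ((c p.1)⁻¹ * f ((p.2 - a p.1) / c p.1)) := by
  rw [prod_withDensity_right (by fun_prop)]
  refine Measure.ext_of_lintegral _ fun φ hφ => ?_
  rw [lintegral_map hφ (by fun_prop), lintegral_withDensity_eq_lintegral_mul _ (by fun_prop)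
      (by fun_prop), lintegral_withDensity_eq_lintegral_mul _ (by fun_prop) hφ,
    lintegral_prod _ (by fun_prop), lintegral_prod _ (by fun_prop)]
  refine lintegral_congr_ae (hc_pos.mono fun x hx => ?_)
  simp only [Pi.mul_apply]
  conv_rhs => rw [lintegral_eq_ofReal_mul_lintegral_comp_affine (by fun_prop) hx (a x)]
  rw [← lintegral_const_mul _ (by fun_prop)]
  refine lintegral_congr fun y => ?_
  simp only [add_sub_cancel_left, mul_div_cancel_left₀ y hx.ne', ← mul_assoc,
    ← ENNReal.ofReal_mul hx.le, mul_inv_cancel_left₀ hx.ne']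

lemma map_swap_withDensity_prod {α β : Type*} [MeasurableSpace α] [MeasurableSpace β]
    {μ : Measure α} {ν : Measure β} [SFinite μ] [SFinite ν] {f : α × β → ℝ≥0∞}
    (hf : Measurable f) :
    ((μ.prod ν).withDensity f).map Prod.swap = (ν.prod μ).withDensity (f ∘ Prod.swap) := by
  refine Measure.ext_of_lintegral _ fun φ hφ => ?_
  rw [lintegral_map hφ measurable_swap, lintegral_withDensity_eq_lintegral_mul _ hf (by fun_prop),
    lintegral_withDensity_eq_lintegral_mul _ (by fun_prop) hφ, ← lintegral_prod_swap]
  rfl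

lemma betaDist_eq_betaMeasure (a c : ℝ) : betaDist a c = betaMeasure a c := by
  unfold betaDist betaMeasure
  congr with x
  rw [betaPDF_eq, beta, one_div_div]

lemma betaPDFReal_nonneg {a c : ℝ} (ha : 0 < a) (hc : 0 < c) (x : ℝ) :
    0 ≤ betaPDFReal a c x := by
  by_cases hx : 0 < x ∧ x < 1
  · exact (betaPDFReal_pos hx.1 hx.2 ha hc).le
  · simp only [betaPDFReal, if_neg hx, le_refl]

lemma ae_betaMeasure_mem_Ioo (a c : ℝ) : ∀ᵐ x ∂betaMeasure a c, x ∈ Ioo 0 1 := by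
  rw [betaMeasure, ae_withDensity_iff (by unfold betaPDF; fun_prop)]
  refine ae_of_all _ fun x hx => ⟨?_, ?_⟩
  · by_contra h
    exact hx (betaPDF_eq_zero_of_nonpos (not_lt.mp h))
  · by_contra h
    exact hx (betaPDF_eq_zero_of_one_le (not_lt.mp h))

lemma ae_mem_Ioo_of_map_eq_betaMeasure {Ω : Type*} [MeasurableSpace Ω] {μ : Measure Ω}
    {X : Ω → ℝ} (hX : Measurable X) {a c : ℝ} (h : μ.map X = betaMeasure a c) :
    ∀ᵐ ω ∂μ, X ω ∈ Ioo 0 1 :=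
  ae_of_ae_map hX.aemeasurable (h ▸ ae_betaMeasure_mem_Ioo a c)

lemma betaMeasure_eq_withDensity_ofReal (a c : ℝ) :
    betaMeasure a c = volume.withDensity fun x => ENNReal.ofReal (betaPDFReal a c x) := rfl

lemma betaMeasure_prod_volume_withDensity {a c : ℝ} (ha : 0 < a) (hc : 0 < c)
    {g : ℝ × ℝ → ℝ} (hg : Measurable g) :
    ((betaMeasure a c).prod volume).withDensity (fun p => ENNReal.ofReal (g p))
      = (volume.prod volume).withDensity
          fun p => ENNReal.ofReal (betaPDFReal a c p.1 * g p) := by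
  rw [betaMeasure, prod_withDensity_left (by unfold betaPDF; fun_prop),
    ← withDensity_mul _ (by unfold betaPDF; fun_prop) (by fun_prop)]
  congr with p
  rw [Pi.mul_apply, betaPDF, ← ENNReal.ofReal_mul (betaPDFReal_nonneg ha hc _)]

-- Density at `(x, u) = (U + V, U)` when `(U, V, 1 - U - V)` is Dirichlet(l, m, b).
noncomputable def dirichletPDFReal (l m b : ℝ) (p : ℝ × ℝ) : ℝ :=
  if 0 < p.2 ∧ p.2 < p.1 ∧ p.1 < 1 then
    Real.Gamma (l + m + b) / (Real.Gamma l * Real.Gamma m * Real.Gamma b) *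
      p.2 ^ (l - 1) * (p.1 - p.2) ^ (m - 1) * (1 - p.1) ^ (b - 1)
  else 0

noncomputable def dirichletLaw (l m b : ℝ) : Measure (ℝ × ℝ) :=
  (volume.prod volume).withDensity fun p => ENNReal.ofReal (dirichletPDFReal l m b p)

lemma measurable_dirichletPDFReal (l m b : ℝ) : Measurable (dirichletPDFReal l m b) :=
  Measurable.ite (by measurability) (by fun_prop) (by fun_prop)

section DirichletLaw

variable {l m b : ℝ}

lemma betaPDFReal_mul_scaled_eq_dirichletPDFReal (hl : 0 < l) (hm : 0 < m) (hb : 0 < b)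
    (x u : ℝ) :
    betaPDFReal (m + l) b x * (x⁻¹ * betaPDFReal l m (u / x))
      = dirichletPDFReal l m b (x, u) := by
  by_cases h : 0 < u ∧ u < x ∧ x < 1
  · obtain ⟨hu, hux, hx1⟩ := h
    have hx : 0 < x := hu.trans hux
    rw [betaPDFReal, betaPDFReal, dirichletPDFReal, if_pos ⟨hx, hx1⟩,
      if_pos ⟨div_pos hu hx, (div_lt_one hx).mpr hux⟩, if_pos ⟨hu, hux, hx1⟩]
    have hsplit : x ^ (m + l - 1) = x ^ (l - 1) * x ^ (m - 1) * x := by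
      rw [show m + l - 1 = (l - 1) + ((m - 1) + 1) by ring, Real.rpow_add hx, Real.rpow_add hx,
        Real.rpow_one, mul_assoc]
    rw [hsplit, Real.div_rpow hu.le hx.le, show 1 - u / x = (x - u) / x by field_simp,
      Real.div_rpow (by linarith) hx.le, beta, beta, add_comm m l]
    have := Real.Gamma_pos_of_pos hl
    have := Real.Gamma_pos_of_pos hm
    have := Real.Gamma_pos_of_pos hb
    have := Real.Gamma_pos_of_pos (add_pos hl hm)
    have := Real.Gamma_pos_of_pos (add_pos (add_pos hl hm) hb)
    have := Real.rpow_pos_of_pos hx (l - 1)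
    have := Real.rpow_pos_of_pos hx (m - 1)
    field_simp
  · rw [dirichletPDFReal, if_neg h]
    by_cases hx : 0 < x ∧ x < 1
    · have hux : betaPDFReal l m (u / x) = 0 := if_neg fun h' =>
        h ⟨(div_pos_iff_of_pos_right hx.1).mp h'.1, (div_lt_one hx.1).mp h'.2, hx.2⟩
      rw [hux, mul_zero, mul_zero]
    · rw [betaPDFReal, if_neg hx, zero_mul]

lemma betaPDFReal_mul_affine_eq_dirichletPDFReal (hl : 0 < l) (hm : 0 < m) (hb : 0 < b)
    (u s : ℝ) :
    betaPDFReal l (m + b) u * ((1 - u)⁻¹ * betaPDFReal m b ((s - u) / (1 - u)))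
      = dirichletPDFReal l m b (s, u) := by
  by_cases h : 0 < u ∧ u < s ∧ s < 1
  · obtain ⟨hu, hus, hs1⟩ := h
    have hu1 : 0 < 1 - u := by linarith
    rw [betaPDFReal, betaPDFReal, dirichletPDFReal, if_pos ⟨hu, hus.trans hs1⟩,
      if_pos ⟨div_pos (by linarith) hu1, (div_lt_one hu1).mpr (by linarith)⟩,
      if_pos ⟨hu, hus, hs1⟩]
    have hsplit : (1 - u) ^ (m + b - 1) = (1 - u) ^ (m - 1) * (1 - u) ^ (b - 1) * (1 - u) := by
      rw [show m + b - 1 = (m - 1) + ((b - 1) + 1) by ring, Real.rpow_add hu1,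
        Real.rpow_add hu1, Real.rpow_one, mul_assoc]
    rw [hsplit, Real.div_rpow (by linarith) hu1.le,
      show 1 - (s - u) / (1 - u) = (1 - s) / (1 - u) by field_simp; ring,
      Real.div_rpow (by linarith) hu1.le, beta, beta, ← add_assoc]
    have := Real.Gamma_pos_of_pos hl
    have := Real.Gamma_pos_of_pos hm
    have := Real.Gamma_pos_of_pos hb
    have := Real.Gamma_pos_of_pos (add_pos hm hb)
    have := Real.Gamma_pos_of_pos (add_pos (add_pos hl hm) hb)
    have := Real.rpow_pos_of_pos hu1 (m - 1)
    have := Real.rpow_pos_of_pos hu1 (b - 1)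
    field_simp
  · rw [dirichletPDFReal, if_neg h]
    by_cases hu : 0 < u ∧ u < 1
    · have hu1 : 0 < 1 - u := by linarith
      have hsu : betaPDFReal m b ((s - u) / (1 - u)) = 0 := if_neg fun h' =>
        h ⟨hu.1, by linarith [(div_pos_iff_of_pos_right hu1).mp h'.1],
          by linarith [(div_lt_one hu1).mp h'.2]⟩
      rw [hsu, mul_zero, mul_zero]
    · rw [betaPDFReal, if_neg hu, zero_mul]

theorem map_mul_betaMeasure_prod (hl : 0 < l) (hm : 0 < m) (hb : 0 < b) :
    ((betaMeasure (m + l) b).prod (betaMeasure l m)).map (fun p => (p.1, p.1 * p.2))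
      = dirichletLaw l m b := by
  have hpos : ∀ᵐ x ∂betaMeasure (m + l) b, 0 < x :=
    (ae_betaMeasure_mem_Ioo _ _).mono fun x hx => hx.1
  have h := map_prod_affine_withDensity (measurable_betaPDFReal l m) (a := fun _ => 0)
    (c := fun x => x) measurable_const measurable_id hpos
  simp only [zero_add, sub_zero] at h
  rw [betaMeasure_eq_withDensity_ofReal l m, h,
    betaMeasure_prod_volume_withDensity (add_pos hm hl) hb (by fun_prop), dirichletLaw]
  simp only [betaPDFReal_mul_scaled_eq_dirichletPDFReal hl hm hb]

theorem map_affine_betaMeasure_prod (hl : 0 < l) (hm : 0 < m) (hb : 0 < b) :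
    ((betaMeasure l (m + b)).prod (betaMeasure m b)).map (fun p => (p.1 + (1 - p.1) * p.2, p.1))
      = dirichletLaw l m b := by
  have hpos : ∀ᵐ u ∂betaMeasure l (m + b), 0 < 1 - u :=
    (ae_betaMeasure_mem_Ioo _ _).mono fun u hu => sub_pos.mpr hu.2
  have h := map_prod_affine_withDensity (measurable_betaPDFReal m b) (a := fun u => u)
    (c := fun u => 1 - u) measurable_id (by fun_prop) hpos
  rw [show (fun p : ℝ × ℝ => (p.1 + (1 - p.1) * p.2, p.1))
      = Prod.swap ∘ fun p => (p.1, p.1 + (1 - p.1) * p.2) from rfl,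
    ← Measure.map_map measurable_swap (by fun_prop), betaMeasure_eq_withDensity_ofReal m b, h,
    betaMeasure_prod_volume_withDensity hl (add_pos hm hb) (by fun_prop),
    map_swap_withDensity_prod (by fun_prop), dirichletLaw]
  simp only [Function.comp_def, Prod.fst_swap, Prod.snd_swap,
    betaPDFReal_mul_affine_eq_dirichletPDFReal hl hm hb]

theorem map_snd_dirichletLaw (hl : 0 < l) (hm : 0 < m) (hb : 0 < b) :
    (dirichletLaw l m b).map Prod.snd = betaMeasure l (m + b) := by
  have := isProbabilityMeasureBeta hm hb
  rw [← map_affine_betaMeasure_prod hl hm hb, Measure.map_map measurable_snd (by fun_prop)]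
  exact (Measure.map_fst_prod).trans (by rw [measure_univ, one_smul])

end DirichletLaw

section RandomVariables

variable {Ω : Type*} [MeasurableSpace Ω] {μ : Measure Ω} [IsFiniteMeasure μ] {l m b : ℝ}

theorem map_mul_eq_dirichletLaw {X W : Ω → ℝ} (hX : Measurable X) (hW : Measurable W)
    (hXW : IndepFun X W μ) (hl : 0 < l) (hm : 0 < m) (hb : 0 < b)
    (hXd : μ.map X = betaMeasure (m + l) b) (hWd : μ.map W = betaMeasure l m) :
    μ.map (fun ω => (X ω, X ω * W ω)) = dirichletLaw l m b := by
  rw [← map_mul_betaMeasure_prod hl hm hb, ← hXd, ← hWd,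
    ← hXW.map_prod_eq_prod_map_map hX.aemeasurable hW.aemeasurable,
    Measure.map_map (by fun_prop) (by fun_prop)]
  rfl

theorem map_affine_eq_dirichletLaw {U Y : Ω → ℝ} (hU : Measurable U) (hY : Measurable Y)
    (hUY : IndepFun U Y μ) (hl : 0 < l) (hm : 0 < m) (hb : 0 < b)
    (hUd : μ.map U = betaMeasure l (m + b)) (hYd : μ.map Y = betaMeasure m b) :
    μ.map (fun ω => (U ω + (1 - U ω) * Y ω, U ω)) = dirichletLaw l m b := by
  rw [← map_affine_betaMeasure_prod hl hm hb, ← hUd, ← hYd,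
    ← hUY.map_prod_eq_prod_map_map hU.aemeasurable hY.aemeasurable,
    Measure.map_map (by fun_prop) (by fun_prop)]
  rfl

end RandomVariables

/-- invariance of the beta model. If `R¹, R², Y` are independent with
`R¹ ~ Be(μ+λ,β)`, `R² ~ Be⁻¹(λ,μ)`, `Y ~ Be(μ,β)` (`λ,μ,β > 0`), then
`(Y + (1-Y)·R¹/R², Y·R²/R¹ + (1-Y)) =ᵈ (R¹, R²)`. -/
theorem stmt_12 {Ω : Type*} [MeasurableSpace Ω] (μ : Measure Ω) [IsProbabilityMeasure μ]
    (R1 R2 Y : Ω → ℝ) (hR1 : Measurable R1) (hR2 : Measurable R2) (hY : Measurable Y)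
    (hind : iIndepFun ![R1, R2, Y] μ)
    (l m b : ℝ) (hl : 0 < l) (hm : 0 < m) (hb : 0 < b)
    (hR1d : μ.map R1 = betaDist (m + l) b)
    (hR2d : μ.map (fun ω => (R2 ω)⁻¹) = betaDist l m)
    (hYd : μ.map Y = betaDist m b) :
    μ.map (fun ω => (Y ω + (1 - Y ω) * R1 ω / R2 ω, Y ω * R2 ω / R1 ω + (1 - Y ω)))
      = μ.map (fun ω => (R1 ω, R2 ω)) := by
  rw [betaDist_eq_betaMeasure] at hR1d hR2d hYd
  have hmeas : ∀ i, Measurable (![R1, R2, Y] i) := fun i => by fin_cases i <;> assumption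
  have hXU : μ.map (fun ω => (R1 ω, R1 ω * (R2 ω)⁻¹)) = dirichletLaw l m b :=
    map_mul_eq_dirichletLaw hR1 hR2.inv
      ((hind.indepFun (show (0 : Fin 3) ≠ 1 by decide)).comp measurable_id measurable_inv)
      hl hm hb hR1d hR2d
  have hU : μ.map (fun ω => R1 ω * (R2 ω)⁻¹) = betaMeasure l (m + b) := by
    rw [← map_snd_dirichletLaw hl hm hb, ← hXU, Measure.map_map measurable_snd (by fun_prop)]
    rfl
  have hVU : μ.map (fun ω => (R1 ω * (R2 ω)⁻¹ + (1 - R1 ω * (R2 ω)⁻¹) * Y ω, R1 ω * (R2 ω)⁻¹))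
      = dirichletLaw l m b := map_affine_eq_dirichletLaw (by fun_prop) hY
    ((hind.indepFun_prodMk hmeas 0 1 2 (by decide) (by decide)).comp
      (measurable_fst.mul measurable_snd.inv) measurable_id) hl hm hb hU hYd
  have hR_ne : ∀ᵐ ω ∂μ, R1 ω ≠ 0 ∧ R2 ω ≠ 0 :=
    (ae_mem_Ioo_of_map_eq_betaMeasure (by fun_prop) hU).mono fun ω h => by
      simpa using h.1.ne'
  have hφ : Measurable fun p : ℝ × ℝ => (p.1, p.1 / p.2) := by fun_prop
  calc μ.map (fun ω => (Y ω + (1 - Y ω) * R1 ω / R2 ω, Y ω * R2 ω / R1 ω + (1 - Y ω)))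
      = (dirichletLaw l m b).map fun p => (p.1, p.1 / p.2) := by
        rw [← hVU, Measure.map_map hφ (by fun_prop)]
        refine Measure.map_congr (hR_ne.mono fun ω ⟨h1, h2⟩ => ?_)
        simp only [Function.comp_apply, Prod.mk.injEq]
        constructor <;> field_simp <;> ring
    _ = μ.map (fun ω => (R1 ω, R2 ω)) := by
        rw [← hXU, Measure.map_map hφ (by fun_prop)]
        refine Measure.map_congr (hR_ne.mono fun ω ⟨h1, h2⟩ => ?_)
        simp only [Function.comp_apply, Prod.mk.injEq, true_and]
        field_simp
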